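/- For all x = (x₁, x₂) with x₁ > 0, x₂ > 0: (i) A₁(x) = (1/2)·M₁(x) + (ξρ/2)·L₁(x); (ii) A₂(x) = (ξ√(1−ρ²)/2)·L₁(x); (iii) the Stratonovich drift satisfies b(x) − (1/2)·( (DA₁)(x)[A₁(x)] + (DA₂)(x)[A₂(x)] ) = (1/2)(μ − ξρ/4)·M₂(x) − (1/4)·M₀(x) + (1/2)(κθ − ξ²/4)·L₂(x) − (κ/2)·L₀(x), where (DA_i)(x) denotes the Fréchet derivative of A_i at x. In particular the Heston vector fields V₀ = b − (1/2)(DA₁·A₁ + DA₂·A₂), V₁ = A₁, V₂ = A₂ all lie in the span of the fields M_n, L_n. -/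

import Mathlib

/-- The Heston basis vector field `M_n(x) = (2 x₁ x₂^{1-n/2}, 0)` (real power). -/
noncomputable def hestonMvec (n : ℕ) (x : ℝ × ℝ) : ℝ × ℝ :=
  (2 * x.1 * x.2 ^ (1 - (n : ℝ) / 2), 0)

/-- The Heston basis vector field `L_n(x) = (0, 2 x₂^{1-n/2})` (real power). -/
noncomputable def hestonLvec (n : ℕ) (x : ℝ × ℝ) : ℝ × ℝ :=
  (0, 2 * x.2 ^ (1 - (n : ℝ) / 2))

/-- The Heston drift `b(x) = (μ x₁, κ(θ - x₂))`. -/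
noncomputable def hestonDrift (μ κ θ : ℝ) (x : ℝ × ℝ) : ℝ × ℝ :=
  (μ * x.1, κ * (θ - x.2))

/-- The Heston diffusion vector field `A₁(x) = (x₁ x₂^{1/2}, ξρ x₂^{1/2})`. -/
noncomputable def hestonA1 (ξ ρ : ℝ) (x : ℝ × ℝ) : ℝ × ℝ :=
  (x.1 * x.2 ^ ((1 : ℝ) / 2), ξ * ρ * x.2 ^ ((1 : ℝ) / 2))

/-- The Heston diffusion vector field `A₂(x) = (0, ξ√(1-ρ²) x₂^{1/2})`. -/
noncomputable def hestonA2 (ξ ρ : ℝ) (x : ℝ × ℝ) : ℝ × ℝ :=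
  (0, ξ * Real.sqrt (1 - ρ ^ 2) * x.2 ^ ((1 : ℝ) / 2))

open ContinuousLinearMap

theorem rpow_half_mul_rpow_half {y : ℝ} (hy : 0 < y) :
    y ^ ((1 : ℝ) / 2) * y ^ ((1 : ℝ) / 2) = y := by
  rw [← Real.rpow_add hy]; norm_num

theorem rpow_half_sub_one_mul_rpow_half {y : ℝ} (hy : 0 < y) :
    (1 / 2 * y ^ ((1 : ℝ) / 2 - 1)) * y ^ ((1 : ℝ) / 2) = 1 / 2 := by
  rw [mul_assoc, ← Real.rpow_add hy]; norm_num

section Heston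

variable (ξ ρ : ℝ) {x : ℝ × ℝ}

theorem hestonMvec_zero : hestonMvec 0 x = (2 * x.1 * x.2, 0) := by
  simp [hestonMvec]

theorem hestonMvec_one : hestonMvec 1 x = (2 * x.1 * x.2 ^ ((1 : ℝ) / 2), 0) := by
  norm_num [hestonMvec]

theorem hestonMvec_two : hestonMvec 2 x = (2 * x.1, 0) := by
  norm_num [hestonMvec]

theorem hestonLvec_zero : hestonLvec 0 x = (0, 2 * x.2) := by
  simp [hestonLvec]

theorem hestonLvec_one : hestonLvec 1 x = (0, 2 * x.2 ^ ((1 : ℝ) / 2)) := by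
  norm_num [hestonLvec]

theorem hestonLvec_two : hestonLvec 2 x = (0, 2) := by
  norm_num [hestonLvec]

theorem hestonA1_eq_smul_hestonMvec_add_smul_hestonLvec :
    hestonA1 ξ ρ x = ((1 : ℝ) / 2) • hestonMvec 1 x + (ξ * ρ / 2) • hestonLvec 1 x := by
  simp only [hestonA1, hestonMvec_one, hestonLvec_one, Prod.smul_mk, Prod.mk_add_mk, smul_eq_mul,
    Prod.mk.injEq]
  constructor <;> ring

theorem hestonA2_eq_smul_hestonLvec :
    hestonA2 ξ ρ x = (ξ * Real.sqrt (1 - ρ ^ 2) / 2) • hestonLvec 1 x := by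
  simp only [hestonA2, hestonLvec_one, Prod.smul_mk, smul_eq_mul, Prod.mk.injEq]
  constructor <;> ring

theorem fderiv_hestonA1_apply_hestonA1 (hx : 0 < x.2) :
    fderiv ℝ (hestonA1 ξ ρ) x (hestonA1 ξ ρ x) =
      (x.1 * x.2 + ξ * ρ * x.1 / 2, (ξ * ρ) ^ 2 / 2) := by
  have hs := (hasFDerivAt_snd (p := x)).rpow_const (p := (1 : ℝ) / 2) (Or.inl hx.ne')
  have hA1 : HasFDerivAt (hestonA1 ξ ρ) _ x :=
    (hasFDerivAt_fst.mul hs).prodMk (hs.const_mul (ξ * ρ))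
  have hsq := rpow_half_mul_rpow_half hx
  have hinv := rpow_half_sub_one_mul_rpow_half hx
  rw [hA1.fderiv]
  simp only [hestonA1, prod_apply, add_apply, smul_apply, coe_fst', coe_snd', smul_eq_mul,
    Prod.mk.injEq]
  constructor
  · linear_combination x.1 * hsq + ξ * ρ * x.1 * hinv
  · linear_combination (ξ * ρ) ^ 2 * hinv

theorem fderiv_hestonA2_apply_hestonA2 (hρ : ρ ^ 2 ≤ 1) (hx : 0 < x.2) :
    fderiv ℝ (hestonA2 ξ ρ) x (hestonA2 ξ ρ x) = (0, ξ ^ 2 * (1 - ρ ^ 2) / 2) := by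
  have hs := (hasFDerivAt_snd (p := x)).rpow_const (p := (1 : ℝ) / 2) (Or.inl hx.ne')
  have hA2 : HasFDerivAt (hestonA2 ξ ρ) _ x :=
    (hasFDerivAt_const (0 : ℝ) x).prodMk (hs.const_mul (ξ * Real.sqrt (1 - ρ ^ 2)))
  have hsqrt := Real.mul_self_sqrt (sub_nonneg.mpr hρ)
  have hinv := rpow_half_sub_one_mul_rpow_half hx
  rw [hA2.fderiv]
  simp only [hestonA2, prod_apply, zero_apply, smul_apply, coe_snd', smul_eq_mul, Prod.mk.injEq,
    true_and]
  linear_combination ξ ^ 2 / 2 * hsqrt + ξ ^ 2 * Real.sqrt (1 - ρ ^ 2) ^ 2 * hinv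

end Heston

theorem heston_vector_fields_span_general (μ κ θ ξ ρ : ℝ) (hρ₁ : -1 < ρ) (hρ₂ : ρ < 1)
    (x : ℝ × ℝ) (hx₂ : 0 < x.2) :
    hestonA1 ξ ρ x = ((1 : ℝ) / 2) • hestonMvec 1 x + (ξ * ρ / 2) • hestonLvec 1 x ∧
    hestonA2 ξ ρ x = (ξ * Real.sqrt (1 - ρ ^ 2) / 2) • hestonLvec 1 x ∧
    hestonDrift μ κ θ x
        - ((1 : ℝ) / 2) • (fderiv ℝ (hestonA1 ξ ρ) x (hestonA1 ξ ρ x)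
            + fderiv ℝ (hestonA2 ξ ρ) x (hestonA2 ξ ρ x))
      = ((1 / 2) * (μ - ξ * ρ / 4)) • hestonMvec 2 x
        + (-(1 / 4 : ℝ)) • hestonMvec 0 x
        + ((1 / 2) * (κ * θ - ξ ^ 2 / 4)) • hestonLvec 2 x
        + (-(κ / 2)) • hestonLvec 0 x := by
  refine ⟨hestonA1_eq_smul_hestonMvec_add_smul_hestonLvec ξ ρ,
    hestonA2_eq_smul_hestonLvec ξ ρ, ?_⟩
  have hρ : ρ ^ 2 ≤ 1 := by nlinarith
  rw [fderiv_hestonA1_apply_hestonA1 ξ ρ hx₂, fderiv_hestonA2_apply_hestonA2 ξ ρ hρ hx₂,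
    hestonMvec_two, hestonMvec_zero, hestonLvec_two, hestonLvec_zero]
  simp only [hestonDrift, Prod.smul_mk, Prod.mk_add_mk, Prod.mk_sub_mk, smul_eq_mul,
    Prod.mk.injEq]
  constructor <;> ring

/-- On the open positive quadrant, the Heston vector fields `V₁ = A₁`, `V₂ = A₂` and the
Stratonovich-corrected drift `V₀ = b - (1/2)(DA₁·A₁ + DA₂·A₂)` lie in the span of the
fields `M_n, L_n`, with the explicit expressions
`A₁ = (1/2) M₁ + (ξρ/2) L₁`, `A₂ = (ξ√(1-ρ²)/2) L₁`, and
`V₀ = (1/2)(μ - ξρ/4) M₂ - (1/4) M₀ + (1/2)(κθ - ξ²/4) L₂ - (κ/2) L₀`. -/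
theorem heston_vector_fields_span (μ κ θ ξ ρ : ℝ) (hρ₁ : -1 < ρ) (hρ₂ : ρ < 1)
    (x : ℝ × ℝ) (hx₁ : 0 < x.1) (hx₂ : 0 < x.2) :
    hestonA1 ξ ρ x = ((1 : ℝ) / 2) • hestonMvec 1 x + (ξ * ρ / 2) • hestonLvec 1 x ∧
    hestonA2 ξ ρ x = (ξ * Real.sqrt (1 - ρ ^ 2) / 2) • hestonLvec 1 x ∧
    hestonDrift μ κ θ x
        - ((1 : ℝ) / 2) • (fderiv ℝ (hestonA1 ξ ρ) x (hestonA1 ξ ρ x)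
            + fderiv ℝ (hestonA2 ξ ρ) x (hestonA2 ξ ρ x))
      = ((1 / 2) * (μ - ξ * ρ / 4)) • hestonMvec 2 x
        + (-(1 / 4 : ℝ)) • hestonMvec 0 x
        + ((1 / 2) * (κ * θ - ξ ^ 2 / 4)) • hestonLvec 2 x
        + (-(κ / 2)) • hestonLvec 0 x :=
  heston_vector_fields_span_general μ κ θ ξ ρ hρ₁ hρ₂ x hx₂
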